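/- arXiv:0905.1486 — 8 statements merged into one kernel-verified Lean document; each statement's English description precedes it below -/
import Mathlib

section
/- Let (𝒳, 𝒜, μ) be a measure space and let s, t be nonnegative integrable functions on 𝒳. Define ρ(s,t) = ∫ √(s t) dμ and, for a nonnegative integrable function r, define ρ_r(s dμ, t) = (1/2)[∫ √(t r) dμ + ∫ √(t/r) · s dμ] (with conventions 0/0 = 0, a/0 = +∞). Then ρ(s,t) = inf over nonnegative integrable r of ρ_r(s dμ, t), and the infimum is attained at r = s. -/
open MeasureTheory Real ENNReal

private lemma key_ineq (a b c : ℝ) (ha : 0 ≤ a) (hb : 0 ≤ b) (hc : 0 ≤ c) :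
    2 * ENNReal.ofReal (Real.sqrt (a * b)) ≤
      ENNReal.ofReal (Real.sqrt (b * c)) +
        ENNReal.ofReal (Real.sqrt b) / ENNReal.ofReal (Real.sqrt c) * ENNReal.ofReal a := by
  rcases eq_or_lt_of_le hc with hc0 | hc0
  · -- c = 0
    rcases eq_or_lt_of_le hb with hb0 | hb0
    · simp [← hb0, Real.sqrt_zero]
    rcases eq_or_lt_of_le ha with ha0 | ha0
    · simp [← ha0, Real.sqrt_zero]
    -- a > 0, b > 0, c = 0 : RHS second term is ∞
    have h1 : ENNReal.ofReal (Real.sqrt c) = 0 := by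
      simp [← hc0]
    have h2 : ENNReal.ofReal (Real.sqrt b) / ENNReal.ofReal (Real.sqrt c) = ⊤ := by
      rw [h1, ENNReal.div_zero]
      simp [ENNReal.ofReal_pos, Real.sqrt_pos, hb0]
    have h3 : ENNReal.ofReal a ≠ 0 := by simp [ENNReal.ofReal_pos, ha0]
    rw [h2, ENNReal.top_mul h3]
    simp
  · -- c > 0
    have hsc : 0 < Real.sqrt c := Real.sqrt_pos.mpr hc0
    rw [← ENNReal.ofReal_div_of_pos hsc,← ENNReal.ofReal_mul (by positivity), ← ENNReal.ofReal_add (by positivity) (by positivity),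
      ← ENNReal.ofReal_ofNat, ← ENNReal.ofReal_mul (by norm_num)]
    refine ENNReal.ofReal_le_ofReal ?_
    have hx := Real.sq_sqrt ha
    have hy := Real.sq_sqrt hb
    have hz := Real.sq_sqrt hc
    rw [Real.sqrt_mul ha, Real.sqrt_mul hb]
    rw [div_mul_eq_mul_div, add_div' (√b * a) (√b * √c) (√c) (ne_of_gt hsc), le_div_iff₀ hsc]
    have hz' : Real.sqrt c * Real.sqrt c = c := Real.mul_self_sqrt hc
    have ha' : Real.sqrt a * Real.sqrt a = a := Real.mul_self_sqrt ha
    have h := mul_nonneg (Real.sqrt_nonneg b) (sq_nonneg (Real.sqrt a - Real.sqrt c))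
    have hrw : Real.sqrt b * (Real.sqrt a - Real.sqrt c)^2 =
        Real.sqrt b * (Real.sqrt a * Real.sqrt a) - 2 * (Real.sqrt a * Real.sqrt b) * Real.sqrt c
          + Real.sqrt b * (Real.sqrt c * Real.sqrt c) := by ring
    rw [hrw, ha', hz'] at h
    rw [mul_assoc (Real.sqrt b), hz']
    ring_nf at h ⊢
    linarith [h]

private lemma key_eq (a b : ℝ) (ha : 0 ≤ a) (hb : 0 ≤ b) :
    ENNReal.ofReal (Real.sqrt (b * a)) +
        ENNReal.ofReal (Real.sqrt b) / ENNReal.ofReal (Real.sqrt a) * ENNReal.ofReal a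
      = 2 * ENNReal.ofReal (Real.sqrt (a * b)) := by
  rcases eq_or_lt_of_le ha with ha0 | ha0
  · simp [← ha0, Real.sqrt_zero]
  · have hsa : 0 < Real.sqrt a := Real.sqrt_pos.mpr ha0
    rw [← ENNReal.ofReal_div_of_pos hsa, ← ENNReal.ofReal_mul (by positivity)]
    have : Real.sqrt b / Real.sqrt a * a = Real.sqrt (b * a) := by
      rw [Real.sqrt_mul hb]
      field_simp
      nlinarith [Real.sq_sqrt ha, Real.sqrt_nonneg a, Real.sqrt_nonneg b]
    rw [this, mul_comm a b, two_mul]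

/-- Variational formula for the Hellinger affinity:
`ρ(s,t) = inf over nonnegative integrable r of ρ_r(s dμ, t)`, with
`ρ_r(s dμ, t) = (1/2)[∫ √(t r) dμ + ∫ √(t/r) · s dμ]` (conventions `0/0 = 0`, `a/0 = +∞`
implemented via `ℝ≥0∞` division), and the infimum is attained at `r = s`. -/
theorem stmt_1 {𝒳 : Type*} [MeasurableSpace 𝒳] (μ : Measure 𝒳) (s t : 𝒳 → ℝ)
    (hs : ∀ x, 0 ≤ s x) (ht : ∀ x, 0 ≤ t x)
    (hsi : Integrable s μ) (hti : Integrable t μ) :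
    (∀ r : 𝒳 → ℝ, (∀ x, 0 ≤ r x) → Integrable r μ →
      (∫⁻ x, ENNReal.ofReal (Real.sqrt (s x * t x)) ∂μ) ≤
        (1/2) * ((∫⁻ x, ENNReal.ofReal (Real.sqrt (t x * r x)) ∂μ)
          + ∫⁻ x, (ENNReal.ofReal (Real.sqrt (t x)) / ENNReal.ofReal (Real.sqrt (r x)))
              * ENNReal.ofReal (s x) ∂μ))
    ∧ (1/2) * ((∫⁻ x, ENNReal.ofReal (Real.sqrt (t x * s x)) ∂μ)
          + ∫⁻ x, (ENNReal.ofReal (Real.sqrt (t x)) / ENNReal.ofReal (Real.sqrt (s x)))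
              * ENNReal.ofReal (s x) ∂μ)
        = ∫⁻ x, ENNReal.ofReal (Real.sqrt (s x * t x)) ∂μ := by
  have hsm : AEMeasurable s μ := hsi.aemeasurable
  have htm : AEMeasurable t μ := hti.aemeasurable
  constructor
  · intro r hr hri
    have hrm : AEMeasurable r μ := hri.aemeasurable
    have hA : AEMeasurable (fun x => ENNReal.ofReal (Real.sqrt (t x * r x))) μ :=
      (Real.continuous_sqrt.measurable.comp_aemeasurable (htm.mul hrm)).ennreal_ofReal
    rw [← lintegral_add_left' hA]
    have h2 : (∫⁻ x, ENNReal.ofReal (Real.sqrt (s x * t x)) ∂μ) =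
        (1/2 : ℝ≥0∞) * ∫⁻ x, 2 * ENNReal.ofReal (Real.sqrt (s x * t x)) ∂μ := by
      rw [lintegral_const_mul' _ _ (by norm_num), ← mul_assoc, one_div,
        ENNReal.inv_mul_cancel (by norm_num) (by norm_num), one_mul]
    rw [h2]
    refine mul_le_mul_right (lintegral_mono fun x => ?_) _
    exact key_ineq (s x) (t x) (r x) (hs x) (ht x) (hr x)
  · have hA : AEMeasurable (fun x => ENNReal.ofReal (Real.sqrt (t x * s x))) μ :=
      (Real.continuous_sqrt.measurable.comp_aemeasurable (htm.mul hsm)).ennreal_ofReal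
    rw [← lintegral_add_left' hA]
    have h1 : (∫⁻ x, ENNReal.ofReal (Real.sqrt (t x * s x)) +
        ENNReal.ofReal (Real.sqrt (t x)) / ENNReal.ofReal (Real.sqrt (s x))
          * ENNReal.ofReal (s x) ∂μ) =
        ∫⁻ x, 2 * ENNReal.ofReal (Real.sqrt (s x * t x)) ∂μ := by
      exact lintegral_congr fun x => key_eq (s x) (t x) (hs x) (ht x)
    rw [h1, lintegral_const_mul' _ _ (by norm_num), ← mul_assoc, one_div,
      ENNReal.inv_mul_cancel (by norm_num) (by norm_num), one_mul]
end

section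
/- Let s, t, r be nonnegative integrable functions on a measure space (𝒳, 𝒜, μ). Then ρ_r(s dμ, t) − ρ(s,t) = (1/2) ∫ √(t/r) (√s − √r)² dμ, where ρ(s,t) = ∫√(st) dμ and ρ_r(s dμ, t) = (1/2)[∫√(tr) dμ + ∫√(t/r) s dμ]. -/
/-!
Pointwise this is completing the square: with `a = √s`, `b = √t`, `c = √r`,
`½ (b c + (b / c) a²) = a b + ½ (b / c) (a - c)²`. Where `c = 0` both sides are `∞` as soon
as `a b ≠ 0`, by the convention `b / 0 = ∞`. Integrating the identity gives the theorem.
-/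

open MeasureTheory Real ENNReal

lemma half_mul_add_div_mul_sq {a b c : ℝ} (hc : c ≠ 0) :
    1 / 2 * (b * c + b / c * a ^ 2) = a * b + 1 / 2 * (b / c * (a - c) ^ 2) := by
  field_simp
  ring

lemma ENNReal.half_mul_ofReal_add_div_mul_sq {a b c : ℝ} (ha : 0 ≤ a) (hb : 0 ≤ b)
    (hc : 0 ≤ c) :
    1 / 2 * (ENNReal.ofReal (b * c)
        + ENNReal.ofReal b / ENNReal.ofReal c * ENNReal.ofReal (a ^ 2))
      = ENNReal.ofReal (a * b)
        + 1 / 2 * (ENNReal.ofReal b / ENNReal.ofReal c * ENNReal.ofReal ((a - c) ^ 2)) := by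
  obtain rfl | hc := hc.eq_or_lt
  · obtain rfl | ha := ha.eq_or_lt
    · simp
    obtain rfl | hb := hb.eq_or_lt
    · simp
    simp [ENNReal.div_zero, hb, ha.ne', ENNReal.top_mul, ENNReal.mul_top]
  · have h : (1 / 2 : ℝ≥0∞) = ENNReal.ofReal (1 / 2) := by
      rw [one_div, one_div, ENNReal.ofReal_inv_of_pos two_pos, ENNReal.ofReal_ofNat]
    rw [h, ← ENNReal.ofReal_div_of_pos hc, ← ENNReal.ofReal_mul (by positivity),
      ← ENNReal.ofReal_mul (by positivity), ← ENNReal.ofReal_add (by positivity) (by positivity),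
      ← ENNReal.ofReal_mul (by norm_num), ← ENNReal.ofReal_mul (by norm_num),
      ← ENNReal.ofReal_add (by positivity) (by positivity), half_mul_add_div_mul_sq hc.ne']

lemma ENNReal.half_mul_ofReal_sqrt_add_div_mul {s t : ℝ} (hs : 0 ≤ s) (ht : 0 ≤ t) (r : ℝ) :
    1 / 2 * (ENNReal.ofReal (√(t * r))
        + ENNReal.ofReal (√t) / ENNReal.ofReal (√r) * ENNReal.ofReal s)
      = ENNReal.ofReal (√(s * t))
        + 1 / 2 * (ENNReal.ofReal (√t) / ENNReal.ofReal (√r) * ENNReal.ofReal ((√s - √r) ^ 2)) := by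
  have h := half_mul_ofReal_add_div_mul_sq (sqrt_nonneg s) (sqrt_nonneg t) (sqrt_nonneg r)
  rwa [sq_sqrt hs, ← sqrt_mul ht, ← sqrt_mul hs] at h

theorem stmt_2_general {𝒳 : Type*} [MeasurableSpace 𝒳] (μ : Measure 𝒳) (s t r : 𝒳 → ℝ)
    (hs : ∀ x, 0 ≤ s x) (ht : ∀ x, 0 ≤ t x)
    (hsi : Integrable s μ) (hti : Integrable t μ) (hri : Integrable r μ) :
    (1/2) * ((∫⁻ x, ENNReal.ofReal (Real.sqrt (t x * r x)) ∂μ)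
        + ∫⁻ x, (ENNReal.ofReal (Real.sqrt (t x)) / ENNReal.ofReal (Real.sqrt (r x)))
            * ENNReal.ofReal (s x) ∂μ)
      = (∫⁻ x, ENNReal.ofReal (Real.sqrt (s x * t x)) ∂μ)
        + (1/2) * ∫⁻ x, (ENNReal.ofReal (Real.sqrt (t x)) / ENNReal.ofReal (Real.sqrt (r x)))
            * ENNReal.ofReal ((Real.sqrt (s x) - Real.sqrt (r x))^2) ∂μ := by
  have hsm := hsi.aemeasurable
  have htm := hti.aemeasurable
  have hrm := hri.aemeasurable
  have half_ne_top : (1 / 2 : ℝ≥0∞) ≠ ∞ := by norm_num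
  rw [← lintegral_add_left' (by fun_prop), ← lintegral_const_mul' _ _ half_ne_top,
    ← lintegral_const_mul' _ _ half_ne_top, ← lintegral_add_left' (by fun_prop)]
  exact lintegral_congr fun x ↦ half_mul_ofReal_sqrt_add_div_mul (hs x) (ht x) (r x)

/-- `ρ_r(s dμ, t) = ρ(s,t) + (1/2) ∫ √(t/r) (√s − √r)² dμ`, i.e. the difference
`ρ_r(s dμ, t) − ρ(s,t)` equals `(1/2) ∫ √(t/r)(√s − √r)² dμ` (conventions `0/0 = 0`,
`a/0 = +∞` implemented via `ℝ≥0∞` division). -/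
theorem stmt_2 {𝒳 : Type*} [MeasurableSpace 𝒳] (μ : Measure 𝒳) (s t r : 𝒳 → ℝ)
    (hs : ∀ x, 0 ≤ s x) (ht : ∀ x, 0 ≤ t x) (hr : ∀ x, 0 ≤ r x)
    (hsi : Integrable s μ) (hti : Integrable t μ) (hri : Integrable r μ) :
    (1/2) * ((∫⁻ x, ENNReal.ofReal (Real.sqrt (t x * r x)) ∂μ)
        + ∫⁻ x, (ENNReal.ofReal (Real.sqrt (t x)) / ENNReal.ofReal (Real.sqrt (r x)))
            * ENNReal.ofReal (s x) ∂μ)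
      = (∫⁻ x, ENNReal.ofReal (Real.sqrt (s x * t x)) ∂μ)
        + (1/2) * ∫⁻ x, (ENNReal.ofReal (Real.sqrt (t x)) / ENNReal.ofReal (Real.sqrt (r x)))
            * ENNReal.ofReal ((Real.sqrt (s x) - Real.sqrt (r x))^2) ∂μ :=
  stmt_2_general μ s t r hs ht hsi hti hri
end

section
/- Let s, t, t' be nonnegative integrable functions on a measure space and set r = (t + t')/2. Define H²(u,v) = (1/2)∫(√u − √v)² dμ, ρ(s,t) = ∫√(st) dμ, and ρ_r(s dμ, t) = (1/2)[∫√(tr) dμ + ∫√(t/r) s dμ]. Then 0 ≤ ρ_r(s dμ, t) − ρ(s,t) ≤ (1/√2)[H²(s,t) + H²(s,t')]. -/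
open MeasureTheory Real ENNReal

private theorem realkey1 (a b d : ℝ) (hb : 0 ≤ b) (hd : 0 < d) :
    2 * (a * b) ≤ b * d + b / d * a ^ 2 := by
  have h : b / d * a ^ 2 = b * a ^ 2 / d := by ring
  rw [h, ← sub_nonneg]
  have : b * d + b * a ^ 2 / d - 2 * (a * b) = b * (d - a) ^ 2 / d := by field_simp; ring
  rw [this]
  positivity

private theorem realkey2 (a b c d e : ℝ) (ha : 0 ≤ a) (hd : 0 < d)
    (he : e = Real.sqrt 2) (hr : 2 * d ^ 2 = b ^ 2 + c ^ 2) :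
    b * d + b / d * a ^ 2 ≤ 2 * (a * b) + 1 / e * ((a - b) ^ 2 + (a - c) ^ 2) := by
  have he0 : 0 < e := by rw [he]; positivity
  have he2 : e ^ 2 = 2 := by rw [he]; rw [sq_sqrt]; norm_num
  have hbe : b * e ≤ 2 * d := by nlinarith [sq_nonneg (b * e - 2 * d), sq_nonneg (b - c), sq_nonneg c]
  have h2d : b + c ≤ 2 * d := by nlinarith [sq_nonneg (b - c), sq_nonneg (b + c - 2 * d)]
  have key : 2 * (d - a) ^ 2 ≤ (a - b) ^ 2 + (a - c) ^ 2 := by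
    nlinarith [mul_nonneg ha (sub_nonneg.2 h2d)]
  have step : b * d + b / d * a ^ 2 - 2 * (a * b) = b * (d - a) ^ 2 / d := by field_simp; ring
  rw [← sub_le_iff_le_add', step, div_le_iff₀ hd, one_div, inv_mul_eq_div, div_mul_eq_mul_div,
    le_div_iff₀ he0]
  nlinarith [mul_le_mul_of_nonneg_right hbe (sq_nonneg (d - a)),
    mul_le_mul_of_nonneg_left key hd.le]

/-- With `r = (t + t')/2`, one has
`0 ≤ ρ_r(s dμ, t) − ρ(s,t) ≤ (1/√2)[H²(s,t) + H²(s,t')]`, stated as the two inequalities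
`ρ(s,t) ≤ ρ_r(s dμ,t)` and `ρ_r(s dμ,t) ≤ ρ(s,t) + (1/√2)(H²(s,t)+H²(s,t'))`. -/
theorem stmt_3 {𝒳 : Type*} [MeasurableSpace 𝒳] (μ : Measure 𝒳) (s t t' : 𝒳 → ℝ)
    (hs : ∀ x, 0 ≤ s x) (ht : ∀ x, 0 ≤ t x) (ht' : ∀ x, 0 ≤ t' x)
    (hsi : Integrable s μ) (hti : Integrable t μ) (ht'i : Integrable t' μ)
    (r : 𝒳 → ℝ) (hrdef : r = fun x => (t x + t' x) / 2) :
    (∫⁻ x, ENNReal.ofReal (Real.sqrt (s x * t x)) ∂μ) ≤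
      (1/2) * ((∫⁻ x, ENNReal.ofReal (Real.sqrt (t x * r x)) ∂μ)
        + ∫⁻ x, (ENNReal.ofReal (Real.sqrt (t x)) / ENNReal.ofReal (Real.sqrt (r x)))
            * ENNReal.ofReal (s x) ∂μ)
    ∧ (1/2) * ((∫⁻ x, ENNReal.ofReal (Real.sqrt (t x * r x)) ∂μ)
        + ∫⁻ x, (ENNReal.ofReal (Real.sqrt (t x)) / ENNReal.ofReal (Real.sqrt (r x)))
            * ENNReal.ofReal (s x) ∂μ)
      ≤ (∫⁻ x, ENNReal.ofReal (Real.sqrt (s x * t x)) ∂μ)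
        + ENNReal.ofReal ((1 / Real.sqrt 2) *
            ((1/2) * (∫ x, (Real.sqrt (s x) - Real.sqrt (t x))^2 ∂μ)
              + (1/2) * (∫ x, (Real.sqrt (s x) - Real.sqrt (t' x))^2 ∂μ))) := by
  have hr : ∀ x, 0 ≤ r x := by
    intro x; rw [hrdef]; simp only; have := ht x; have := ht' x; linarith
  -- measurability
  have hsm := hsi.aemeasurable
  have htm := hti.aemeasurable
  have ht'm := ht'i.aemeasurable
  have hrm : AEMeasurable r μ := by
    rw [hrdef]; exact (htm.add ht'm).div_const 2
  have hsqrt : ∀ {f : 𝒳 → ℝ}, AEMeasurable f μ → AEMeasurable (fun x => Real.sqrt (f x)) μ :=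
    fun hf => Real.continuous_sqrt.measurable.comp_aemeasurable hf
  have hg1m : AEMeasurable (fun x => ENNReal.ofReal (Real.sqrt (t x * r x))) μ :=
    (hsqrt (htm.mul hrm)).ennreal_ofReal
  -- abbreviations
  set L := ∫⁻ x, ENNReal.ofReal (Real.sqrt (s x * t x)) ∂μ with hL
  set A := ∫⁻ x, ENNReal.ofReal (Real.sqrt (t x * r x)) ∂μ with hA
  set B := ∫⁻ x, (ENNReal.ofReal (Real.sqrt (t x)) / ENNReal.ofReal (Real.sqrt (r x)))
      * ENNReal.ofReal (s x) ∂μ with hB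
  set C := ENNReal.ofReal ((1 / Real.sqrt 2) *
      ((1/2) * (∫ x, (Real.sqrt (s x) - Real.sqrt (t x))^2 ∂μ)
        + (1/2) * (∫ x, (Real.sqrt (s x) - Real.sqrt (t' x))^2 ∂μ))) with hC
  -- in the positive-r case the ENNReal integrand of B simplifies
  have hBsimp : ∀ x, 0 < r x →
      (ENNReal.ofReal (Real.sqrt (t x)) / ENNReal.ofReal (Real.sqrt (r x)))
        * ENNReal.ofReal (s x)
      = ENNReal.ofReal (Real.sqrt (t x) / Real.sqrt (r x) * s x) := by
    intro x hx
    rw [← ENNReal.ofReal_div_of_pos (Real.sqrt_pos.2 hx), ← ENNReal.ofReal_mul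
      (div_nonneg (Real.sqrt_nonneg _) (Real.sqrt_nonneg _))]
  have hrzero : ∀ x, r x = 0 → t x = 0 ∧ t' x = 0 := by
    intro x hx
    rw [hrdef] at hx
    simp only at hx
    constructor <;> nlinarith [ht x, ht' x]
  -- pointwise inequality 1
  have key1 : ∀ x, 2 * ENNReal.ofReal (Real.sqrt (s x * t x)) ≤
      ENNReal.ofReal (Real.sqrt (t x * r x))
        + (ENNReal.ofReal (Real.sqrt (t x)) / ENNReal.ofReal (Real.sqrt (r x)))
            * ENNReal.ofReal (s x) := by
    intro x
    rcases (hr x).lt_or_eq with hx | hx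
    · rw [hBsimp x hx, ← ENNReal.ofReal_add (by positivity)
        (mul_nonneg (div_nonneg (Real.sqrt_nonneg _) (Real.sqrt_nonneg _)) (hs x))]
      calc 2 * ENNReal.ofReal (Real.sqrt (s x * t x))
          = ENNReal.ofReal (2 * Real.sqrt (s x * t x)) := by
            rw [ENNReal.ofReal_mul (by norm_num)]; norm_num
        _ ≤ _ := by
            apply ENNReal.ofReal_le_ofReal
            rw [Real.sqrt_mul (hs x), Real.sqrt_mul (ht x)]
            have := realkey1 (Real.sqrt (s x)) (Real.sqrt (t x)) (Real.sqrt (r x))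
              (Real.sqrt_nonneg _) (Real.sqrt_pos.2 hx)
            rw [Real.sq_sqrt (hs x)] at this
            linarith
    · obtain ⟨h1, _⟩ := hrzero x hx.symm
      simp [h1, hx.symm]
  -- pointwise inequality 2
  have key2 : ∀ x, ENNReal.ofReal (Real.sqrt (t x * r x))
        + (ENNReal.ofReal (Real.sqrt (t x)) / ENNReal.ofReal (Real.sqrt (r x)))
            * ENNReal.ofReal (s x)
      ≤ 2 * ENNReal.ofReal (Real.sqrt (s x * t x))
        + ENNReal.ofReal ((1 / Real.sqrt 2) *
            ((Real.sqrt (s x) - Real.sqrt (t x))^2 + (Real.sqrt (s x) - Real.sqrt (t' x))^2)) := by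
    intro x
    rcases (hr x).lt_or_eq with hx | hx
    · rw [hBsimp x hx, ← ENNReal.ofReal_add (by positivity)
        (mul_nonneg (div_nonneg (Real.sqrt_nonneg _) (Real.sqrt_nonneg _)) (hs x))]
      have h2 : (2 : ℝ≥0∞) * ENNReal.ofReal (Real.sqrt (s x * t x))
          = ENNReal.ofReal (2 * Real.sqrt (s x * t x)) := by
        rw [ENNReal.ofReal_mul (by norm_num)]; norm_num
      rw [h2, ← ENNReal.ofReal_add (by positivity) (by positivity)]
      apply ENNReal.ofReal_le_ofReal
      rw [Real.sqrt_mul (hs x), Real.sqrt_mul (ht x)]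
      have hd2 : 2 * Real.sqrt (r x) ^ 2 = Real.sqrt (t x) ^ 2 + Real.sqrt (t' x) ^ 2 := by
        rw [Real.sq_sqrt (hr x), Real.sq_sqrt (ht x), Real.sq_sqrt (ht' x), hrdef]
        ring
      have := realkey2 (Real.sqrt (s x)) (Real.sqrt (t x)) (Real.sqrt (t' x))
        (Real.sqrt (r x)) (Real.sqrt 2) (Real.sqrt_nonneg _) (Real.sqrt_pos.2 hx) rfl hd2
      rw [Real.sq_sqrt (hs x)] at this
      linarith
    · obtain ⟨h1, _⟩ := hrzero x hx.symm
      simp [h1, hx.symm]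
  -- integrability of the squared differences
  have hsq_int : ∀ (g : 𝒳 → ℝ), (∀ x, 0 ≤ g x) → Integrable g μ →
      Integrable (fun x => (Real.sqrt (s x) - Real.sqrt (g x))^2) μ := by
    intro g hg hgi
    have hbound : Integrable (fun x => 2 * (s x + g x)) μ := by
      have : Integrable (fun x => s x + g x) μ := hsi.add hgi
      exact this.const_mul 2
    apply Integrable.mono' hbound
    · exact (((hsqrt hsm).sub (hsqrt hgi.aemeasurable)).pow_const 2).aestronglyMeasurable
    · filter_upwards with x
      rw [Real.norm_of_nonneg (sq_nonneg _)]
      have h1 : Real.sqrt (s x) ^ 2 = s x := Real.sq_sqrt (hs x)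
      have h2 : Real.sqrt (g x) ^ 2 = g x := Real.sq_sqrt (hg x)
      nlinarith [sq_nonneg (Real.sqrt (s x) + Real.sqrt (g x))]
  have hu_int := hsq_int t ht hti
  have hv_int := hsq_int t' ht' ht'i
  have hu_nn : 0 ≤ ∫ x, (Real.sqrt (s x) - Real.sqrt (t x))^2 ∂μ :=
    integral_nonneg fun x => sq_nonneg _
  have hv_nn : 0 ≤ ∫ x, (Real.sqrt (s x) - Real.sqrt (t' x))^2 ∂μ :=
    integral_nonneg fun x => sq_nonneg _
  -- the lintegral of the pointwise bound equals 2 * C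
  have hCeq : (∫⁻ x, ENNReal.ofReal ((1 / Real.sqrt 2) *
      ((Real.sqrt (s x) - Real.sqrt (t x))^2 + (Real.sqrt (s x) - Real.sqrt (t' x))^2)) ∂μ)
      = 2 * C := by
    have hw_int : Integrable (fun x =>
        (Real.sqrt (s x) - Real.sqrt (t x))^2 + (Real.sqrt (s x) - Real.sqrt (t' x))^2) μ :=
      hu_int.add hv_int
    rw [← MeasureTheory.ofReal_integral_eq_lintegral_ofReal
      (hw_int.const_mul (1 / Real.sqrt 2))
      (Filter.Eventually.of_forall fun x => by positivity)]
    rw [hC]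
    rw [show (2 : ℝ≥0∞) = ENNReal.ofReal 2 by norm_num,
      ← ENNReal.ofReal_mul (by norm_num)]
    congr 1
    rw [integral_const_mul, integral_add hu_int hv_int]
    ring
  have htwo : ∀ x : ℝ≥0∞, (1/2 : ℝ≥0∞) * (2 * x) = x := by
    intro x
    rw [← mul_assoc, one_div, ENNReal.inv_mul_cancel (by norm_num) (by norm_num), one_mul]
  constructor
  · -- first inequality
    have h2L : 2 * L ≤ A + B := by
      rw [hL, ← lintegral_const_mul' 2 _ (by norm_num), hA, hB, ← lintegral_add_left' hg1m]
      exact lintegral_mono key1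
    calc L = (1/2) * (2 * L) := (htwo L).symm
      _ ≤ (1/2) * (A + B) := mul_le_mul_right h2L _
  · -- second inequality
    have hAB : A + B ≤ 2 * (L + C) := by
      rw [hA, hB, ← lintegral_add_left' hg1m]
      calc (∫⁻ x, ENNReal.ofReal (Real.sqrt (t x * r x))
            + (ENNReal.ofReal (Real.sqrt (t x)) / ENNReal.ofReal (Real.sqrt (r x)))
                * ENNReal.ofReal (s x) ∂μ)
          ≤ ∫⁻ x, 2 * ENNReal.ofReal (Real.sqrt (s x * t x))
              + ENNReal.ofReal ((1 / Real.sqrt 2) *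
                ((Real.sqrt (s x) - Real.sqrt (t x))^2
                  + (Real.sqrt (s x) - Real.sqrt (t' x))^2)) ∂μ := lintegral_mono key2
        _ = (∫⁻ x, 2 * ENNReal.ofReal (Real.sqrt (s x * t x)) ∂μ)
              + ∫⁻ x, ENNReal.ofReal ((1 / Real.sqrt 2) *
                ((Real.sqrt (s x) - Real.sqrt (t x))^2
                  + (Real.sqrt (s x) - Real.sqrt (t' x))^2)) ∂μ :=
            lintegral_add_left' ((hsqrt (hsm.mul htm)).ennreal_ofReal.const_mul 2) _
        _ = 2 * L + 2 * C := by
            rw [lintegral_const_mul' 2 _ (by norm_num), hCeq, hL]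
        _ = 2 * (L + C) := (mul_add 2 L C).symm
    calc (1/2) * (A + B) ≤ (1/2) * (2 * (L + C)) := mul_le_mul_right hAB _
      _ = L + C := htwo _
end

section
/- Let s, t, t' be nonnegative integrable functions on a measure space and set r = (t+t')/2. Then the Hellinger-type distance satisfies 2 H²(s, r) ≤ H²(s, t) + H²(s, t'), where H²(u,v) = (1/2)∫(√u − √v)² dμ. -/
open MeasureTheory

lemma integrable_sqrt_sub_sq {𝒳 : Type*} [MeasurableSpace 𝒳] {μ : Measure 𝒳}
    {u v : 𝒳 → ℝ} (hu : ∀ x, 0 ≤ u x) (hv : ∀ x, 0 ≤ v x)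
    (hui : Integrable u μ) (hvi : Integrable v μ) :
    Integrable (fun x => (Real.sqrt (u x) - Real.sqrt (v x))^2) μ := by
  apply (hui.add hvi).mono
  · exact ((Real.continuous_sqrt.comp_aestronglyMeasurable hui.1).sub
      (Real.continuous_sqrt.comp_aestronglyMeasurable hvi.1)).pow 2
  · filter_upwards with x
    have hu' := hu x
    have hv' := hv x
    have h1 : Real.sqrt (u x) ^ 2 = u x := Real.sq_sqrt hu'
    have h2 : Real.sqrt (v x) ^ 2 = v x := Real.sq_sqrt hv'
    have h3 : 0 ≤ Real.sqrt (u x) * Real.sqrt (v x) :=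
      mul_nonneg (Real.sqrt_nonneg _) (Real.sqrt_nonneg _)
    simp only [Pi.add_apply]
    rw [Real.norm_eq_abs, Real.norm_eq_abs, abs_of_nonneg (sq_nonneg _),
      abs_of_nonneg (by linarith)]
    nlinarith [sq_nonneg (Real.sqrt (u x) - Real.sqrt (v x))]

/-- With `r = (t+t')/2`, the Hellinger-type distance `H²(u,v) = (1/2)∫(√u−√v)² dμ`
satisfies `2 H²(s,r) ≤ H²(s,t) + H²(s,t')`. -/
theorem stmt_4 {𝒳 : Type*} [MeasurableSpace 𝒳] (μ : Measure 𝒳) (s t t' : 𝒳 → ℝ)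
    (hs : ∀ x, 0 ≤ s x) (ht : ∀ x, 0 ≤ t x) (ht' : ∀ x, 0 ≤ t' x)
    (hsi : Integrable s μ) (hti : Integrable t μ) (ht'i : Integrable t' μ)
    (r : 𝒳 → ℝ) (hrdef : r = fun x => (t x + t' x) / 2) :
    2 * ((1/2) * ∫ x, (Real.sqrt (s x) - Real.sqrt (r x))^2 ∂μ) ≤
      (1/2) * (∫ x, (Real.sqrt (s x) - Real.sqrt (t x))^2 ∂μ)
        + (1/2) * (∫ x, (Real.sqrt (s x) - Real.sqrt (t' x))^2 ∂μ) := by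
  subst hrdef
  have hr : ∀ x, 0 ≤ (t x + t' x) / 2 := fun x => by have := ht x; have := ht' x; positivity
  have hri : Integrable (fun x => (t x + t' x) / 2) μ := (hti.add ht'i).div_const 2
  have h1 : Integrable (fun x => (Real.sqrt (s x) - Real.sqrt ((t x + t' x) / 2))^2) μ :=
    integrable_sqrt_sub_sq hs hr hsi hri
  have h2 : Integrable (fun x => (Real.sqrt (s x) - Real.sqrt (t x))^2) μ :=
    integrable_sqrt_sub_sq hs ht hsi hti
  have h3 : Integrable (fun x => (Real.sqrt (s x) - Real.sqrt (t' x))^2) μ :=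
    integrable_sqrt_sub_sq hs ht' hsi ht'i
  have key : ∀ x, 2 * (Real.sqrt (s x) - Real.sqrt ((t x + t' x) / 2))^2 ≤
      (Real.sqrt (s x) - Real.sqrt (t x))^2 + (Real.sqrt (s x) - Real.sqrt (t' x))^2 := by
    intro x
    set a := Real.sqrt (s x)
    set b := Real.sqrt (t x)
    set c := Real.sqrt (t' x)
    set d := Real.sqrt ((t x + t' x) / 2) with hd
    have ha : 0 ≤ a := Real.sqrt_nonneg _
    have hb2 : b ^ 2 = t x := Real.sq_sqrt (ht x)
    have hc2 : c ^ 2 = t' x := Real.sq_sqrt (ht' x)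
    have hd2 : d ^ 2 = (t x + t' x) / 2 := Real.sq_sqrt (hr x)
    have hbc : b + c ≤ 2 * d := by
      have hdnn : 0 ≤ d := Real.sqrt_nonneg _
      have h4 : 2 * d = Real.sqrt (4 * ((t x + t' x) / 2)) := by
        rw [show 4 * ((t x + t' x) / 2) = (2 * d)^2 by nlinarith,
          Real.sqrt_sq (by linarith)]
      have h5 : b + c = Real.sqrt ((b + c)^2) :=
        (Real.sqrt_sq (by positivity)).symm
      rw [h5, h4]
      apply Real.sqrt_le_sqrt
      nlinarith [sq_nonneg (b - c)]
    nlinarith [mul_le_mul_of_nonneg_left hbc ha]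
  have := integral_mono (h1.const_mul 2) (h2.add h3)
    (fun x => key x)
  simp only [Pi.add_apply] at this
  rw [integral_const_mul, integral_add h2 h3] at this
  have heq : (∫ x, (Real.sqrt (s x) - Real.sqrt ((fun x => (t x + t' x) / 2) x))^2 ∂μ) = ∫ x, (Real.sqrt (s x) - Real.sqrt ((t x + t' x) / 2))^2 ∂μ := rfl
  rw [heq]
  linarith
end

section
/- Let s, t, t' be nonnegative integrable functions on a measure space, r = (t+t')/2, and define T(s dμ, t, t') = [ρ_r(s dμ, t') − (1/2)∫ t' dμ] − [ρ_r(s dμ, t) − (1/2)∫ t dμ], with ρ_r(s dμ, u) = (1/2)[∫√(ur) dμ + ∫√(u/r) s dμ]. If T(s dμ, t, t') ≥ 0, then H²(s, t') ≤ ((√2 + 1)/(√2 − 1)) · H²(s, t), where H²(u,v) = (1/2)∫(√u − √v)² dμ. -/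
open MeasureTheory Real ENNReal

/-! Pointwise, `√(u r) + (√u/√r) s = 2 √(s u) + (√u/√r) (√s − √r)²`, so `ρ_r(s dμ, u)` exceeds the
Hellinger affinity `ρ(s, u)` by a nonnegative error which, since `u ≤ 2r`, is at most
`√2 H²(s, r) ≤ (H²(s, t) + H²(s, t')) / √2`. As `H²(s, u) = ½∫s + ½∫u − ρ(s, u)`, the test
`T ≥ 0` gives `H²(s, t') − H²(s, t) ≤ (H²(s, t) + H²(s, t')) / √2`, which rearranges to the
claim. -/

lemma sqrt_mul_le_add_div_two {a b : ℝ} (ha : 0 ≤ a) (hb : 0 ≤ b) : √(a * b) ≤ (a + b) / 2 := by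
  rw [Real.sqrt_mul ha]
  nlinarith [sq_sqrt ha, sq_sqrt hb, sq_nonneg (√a - √b)]

lemma sqrt_div_sqrt_le_sqrt {a b c : ℝ} (hc : 0 ≤ c) (hab : a ≤ c * b) : √a / √b ≤ √c :=
  div_le_of_le_mul₀ (sqrt_nonneg b) (sqrt_nonneg c) <| by
    rw [← Real.sqrt_mul hc]; exact Real.sqrt_le_sqrt hab

lemma sqrt_mul_add_sqrt_div_mul {s u r : ℝ} (hs : 0 ≤ s) (hu : 0 ≤ u) (hr : 0 ≤ r)
    (hur : r = 0 → u = 0) :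
    √(u * r) + √u / √r * s = 2 * √(s * u) + √u / √r * (√s - √r) ^ 2 := by
  rcases hr.eq_or_lt with h | h
  · simp [hur h.symm]
  · have hr' : 0 < √r := sqrt_pos.mpr h
    rw [Real.sqrt_mul hu, Real.sqrt_mul hs]
    field_simp
    linear_combination (-√u) * sq_sqrt hs

lemma sq_sqrt_sub_sqrt_midpoint_le {s a b : ℝ} (ha : 0 ≤ a) (hb : 0 ≤ b) :
    (√s - √((a + b) / 2)) ^ 2 ≤ ((√s - √a) ^ 2 + (√s - √b) ^ 2) / 2 := by
  have hab : 0 ≤ (a + b) / 2 := by positivity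
  have hconc : √a + √b ≤ 2 * √((a + b) / 2) := by
    have : (√a + √b) / 2 ≤ √((a + b) / 2) := by
      rw [Real.le_sqrt (by positivity) hab]
      nlinarith [sq_sqrt ha, sq_sqrt hb, sq_nonneg (√a - √b)]
    linarith
  nlinarith [sq_sqrt ha, sq_sqrt hb, sq_sqrt hab,
    mul_le_mul_of_nonneg_left hconc (sqrt_nonneg s)]

lemma le_div_sub_one_mul_of_sub_le {c X Y : ℝ} (hc : 1 < c) (h : Y - X ≤ (X + Y) / c) :
    Y ≤ (c + 1) / (c - 1) * X := by
  have hc0 : 0 < c := by linarith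
  rw [div_mul_eq_mul_div, le_div_iff₀ (by linarith)]
  rw [le_div_iff₀ hc0] at h
  linarith

section Integrability

variable {α : Type*} [MeasurableSpace α] {μ : Measure α} {f g u r w : α → ℝ}

lemma integrable_sqrt_mul (hf0 : ∀ x, 0 ≤ f x) (hg0 : ∀ x, 0 ≤ g x)
    (hf : Integrable f μ) (hg : Integrable g μ) : Integrable (fun x => √(f x * g x)) μ := by
  refine ((hf.add hg).div_const 2).mono'
    (hf.aemeasurable.mul hg.aemeasurable).sqrt.aestronglyMeasurable (.of_forall fun x => ?_)
  rw [norm_of_nonneg (sqrt_nonneg _)]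
  exact sqrt_mul_le_add_div_two (hf0 x) (hg0 x)

lemma integrable_sq_sqrt_sub_sqrt (hf0 : ∀ x, 0 ≤ f x) (hg0 : ∀ x, 0 ≤ g x)
    (hf : Integrable f μ) (hg : Integrable g μ) :
    Integrable (fun x => (√(f x) - √(g x)) ^ 2) μ := by
  refine ((hf.add hg).const_mul 2).mono'
    ((hf.aemeasurable.sqrt.sub hg.aemeasurable.sqrt).pow_const 2).aestronglyMeasurable
    (.of_forall fun x => ?_)
  rw [norm_of_nonneg (sq_nonneg _), Pi.add_apply]
  nlinarith [sq_sqrt (hf0 x), sq_sqrt (hg0 x), sq_nonneg (√(f x) + √(g x))]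

lemma integrable_sqrt_div_sqrt_mul (hu : AEMeasurable u μ) (hr : AEMeasurable r μ)
    (hw : Integrable w μ) (hur : ∀ x, u x ≤ 2 * r x) :
    Integrable (fun x => √(u x) / √(r x) * w x) μ := by
  refine (hw.norm.const_mul √2).mono'
    ((hu.sqrt.div hr.sqrt).mul hw.aemeasurable).aestronglyMeasurable (.of_forall fun x => ?_)
  rw [norm_mul, norm_of_nonneg (div_nonneg (sqrt_nonneg _) (sqrt_nonneg _))]
  exact mul_le_mul_of_nonneg_right (sqrt_div_sqrt_le_sqrt zero_le_two (hur x)) (norm_nonneg _)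

end Integrability

section Hellinger

variable {α : Type*} [MeasurableSpace α] (μ : Measure α)

noncomputable def hellingerSq (f g : α → ℝ) : ℝ := (1 / 2) * ∫ x, (√(f x) - √(g x)) ^ 2 ∂μ

noncomputable def hellingerAffinity (f g : α → ℝ) : ℝ := ∫ x, √(f x * g x) ∂μ

/-- The paper's `ρ_r(s dμ, u)`. Real division gives `√u / √r = 0` where `r = 0`; this matches the
convention `0/0 = 0` as long as `u ≤ 2r`. -/
noncomputable def variationalAffinity (s u r : α → ℝ) : ℝ :=
  (1 / 2) * ((∫ x, √(u x * r x) ∂μ) + ∫ x, √(u x) / √(r x) * s x ∂μ)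

variable {μ} {s u r t t' : α → ℝ}

lemma variationalAffinity_nonneg (hs0 : ∀ x, 0 ≤ s x) : 0 ≤ variationalAffinity μ s u r :=
  mul_nonneg one_half_pos.le <| add_nonneg (integral_nonneg fun _ => sqrt_nonneg _)
    (integral_nonneg fun x => mul_nonneg (div_nonneg (sqrt_nonneg _) (sqrt_nonneg _)) (hs0 x))

lemma hellingerSq_eq (hs0 : ∀ x, 0 ≤ s x) (hu0 : ∀ x, 0 ≤ u x)
    (hs : Integrable s μ) (hu : Integrable u μ) :
    hellingerSq μ s u
      = (1 / 2) * ∫ x, s x ∂μ + (1 / 2) * ∫ x, u x ∂μ - hellingerAffinity μ s u := by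
  have hpt : ∀ x, (√(s x) - √(u x)) ^ 2 = s x + u x - 2 * √(s x * u x) := fun x => by
    rw [Real.sqrt_mul (hs0 x)]
    nlinarith [sq_sqrt (hs0 x), sq_sqrt (hu0 x)]
  rw [hellingerSq, hellingerAffinity, integral_congr_ae (.of_forall hpt),
    integral_sub (f := fun x => s x + u x) (hs.add hu)
      ((integrable_sqrt_mul hs0 hu0 hs hu).const_mul 2),
    integral_add hs hu, integral_const_mul]
  ring

lemma variationalAffinity_eq (hs0 : ∀ x, 0 ≤ s x) (hu0 : ∀ x, 0 ≤ u x) (hr0 : ∀ x, 0 ≤ r x)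
    (hur : ∀ x, u x ≤ 2 * r x) (hs : Integrable s μ) (hu : Integrable u μ) (hr : Integrable r μ) :
    variationalAffinity μ s u r = hellingerAffinity μ s u
      + (1 / 2) * ∫ x, √(u x) / √(r x) * (√(s x) - √(r x)) ^ 2 ∂μ := by
  have hpt x := sqrt_mul_add_sqrt_div_mul (hs0 x) (hu0 x) (hr0 x)
    fun h => le_antisymm (by linarith [hur x]) (hu0 x)
  rw [variationalAffinity, hellingerAffinity,
    ← integral_add (integrable_sqrt_mul hu0 hr0 hu hr)
      (integrable_sqrt_div_sqrt_mul hu.aemeasurable hr.aemeasurable hs hur),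
    integral_congr_ae (.of_forall hpt),
    integral_add ((integrable_sqrt_mul hs0 hu0 hs hu).const_mul 2)
      (integrable_sqrt_div_sqrt_mul hu.aemeasurable hr.aemeasurable
        (integrable_sq_sqrt_sub_sqrt hs0 hr0 hs hr) hur),
    integral_const_mul]
  ring

lemma hellingerAffinity_le_variationalAffinity (hs0 : ∀ x, 0 ≤ s x) (hu0 : ∀ x, 0 ≤ u x)
    (hr0 : ∀ x, 0 ≤ r x) (hur : ∀ x, u x ≤ 2 * r x) (hs : Integrable s μ) (hu : Integrable u μ)
    (hr : Integrable r μ) :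
    hellingerAffinity μ s u ≤ variationalAffinity μ s u r := by
  rw [variationalAffinity_eq hs0 hu0 hr0 hur hs hu hr, le_add_iff_nonneg_right]
  exact mul_nonneg one_half_pos.le <| integral_nonneg fun x =>
    mul_nonneg (div_nonneg (sqrt_nonneg _) (sqrt_nonneg _)) (sq_nonneg _)

lemma variationalAffinity_le (hs0 : ∀ x, 0 ≤ s x) (hu0 : ∀ x, 0 ≤ u x) (hr0 : ∀ x, 0 ≤ r x)
    (hur : ∀ x, u x ≤ 2 * r x) (hs : Integrable s μ) (hu : Integrable u μ) (hr : Integrable r μ) :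
    variationalAffinity μ s u r ≤ hellingerAffinity μ s u + √2 * hellingerSq μ s r := by
  have hsr := integrable_sq_sqrt_sub_sqrt hs0 hr0 hs hr
  have herr : ∫ x, √(u x) / √(r x) * (√(s x) - √(r x)) ^ 2 ∂μ
      ≤ √2 * ∫ x, (√(s x) - √(r x)) ^ 2 ∂μ := by
    rw [← integral_const_mul]
    refine integral_mono (integrable_sqrt_div_sqrt_mul hu.aemeasurable hr.aemeasurable hsr hur)
      (hsr.const_mul _) fun x => ?_
    exact mul_le_mul_of_nonneg_right (sqrt_div_sqrt_le_sqrt zero_le_two (hur x)) (sq_nonneg _)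
  rw [variationalAffinity_eq hs0 hu0 hr0 hur hs hu hr, hellingerSq]
  linarith

lemma ofReal_variationalAffinity (hs0 : ∀ x, 0 ≤ s x) (hu0 : ∀ x, 0 ≤ u x) (hr0 : ∀ x, 0 ≤ r x)
    (hur : ∀ x, u x ≤ 2 * r x) (hs : Integrable s μ) (hu : Integrable u μ) (hr : Integrable r μ) :
    ENNReal.ofReal (variationalAffinity μ s u r)
      = (1 / 2) * ((∫⁻ x, ENNReal.ofReal (√(u x * r x)) ∂μ)
        + ∫⁻ x, ENNReal.ofReal (√(u x)) / ENNReal.ofReal (√(r x)) * ENNReal.ofReal (s x) ∂μ) := by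
  have hpt x : ENNReal.ofReal (√(u x)) / ENNReal.ofReal (√(r x)) * ENNReal.ofReal (s x)
      = ENNReal.ofReal (√(u x) / √(r x) * s x) := by
    rcases (hr0 x).eq_or_lt with h | h
    · simp [le_antisymm (by linarith [hur x]) (hu0 x), ← h]
    · rw [← ofReal_div_of_pos (sqrt_pos.mpr h),
        ← ofReal_mul (div_nonneg (sqrt_nonneg _) (sqrt_nonneg _))]
  rw [variationalAffinity, ofReal_mul one_half_pos.le,
    ofReal_add (integral_nonneg fun x => sqrt_nonneg _)
      (integral_nonneg fun x => mul_nonneg (div_nonneg (sqrt_nonneg _) (sqrt_nonneg _)) (hs0 x)),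
    ofReal_integral_eq_lintegral_ofReal (integrable_sqrt_mul hu0 hr0 hu hr)
      (.of_forall fun x => sqrt_nonneg _),
    ofReal_integral_eq_lintegral_ofReal
      (integrable_sqrt_div_sqrt_mul hu.aemeasurable hr.aemeasurable hs hur)
      (.of_forall fun x => mul_nonneg (div_nonneg (sqrt_nonneg _) (sqrt_nonneg _)) (hs0 x)),
    lintegral_congr hpt, one_div, one_div, ofReal_inv_of_pos two_pos, ofReal_ofNat]

lemma hellingerSq_midpoint_le (hs0 : ∀ x, 0 ≤ s x) (ht0 : ∀ x, 0 ≤ t x) (ht'0 : ∀ x, 0 ≤ t' x)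
    (hs : Integrable s μ) (ht : Integrable t μ) (ht' : Integrable t' μ) :
    hellingerSq μ s (fun x => (t x + t' x) / 2) ≤ (hellingerSq μ s t + hellingerSq μ s t') / 2 := by
  have hst := integrable_sq_sqrt_sub_sqrt hs0 ht0 hs ht
  have hst' := integrable_sq_sqrt_sub_sqrt hs0 ht'0 hs ht'
  rw [hellingerSq, hellingerSq, hellingerSq, ← mul_add, mul_div_assoc, ← integral_add hst hst',
    ← integral_div]
  gcongr (1 / 2) * ?_
  refine integral_mono (integrable_sq_sqrt_sub_sqrt hs0 (fun x => by linarith [ht0 x, ht'0 x]) hs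
    ((ht.add ht').div_const 2)) ((hst.add hst').div_const 2) fun x => ?_
  exact sq_sqrt_sub_sqrt_midpoint_le (ht0 x) (ht'0 x)

end Hellinger

/-- If the test statistic `T(s dμ, t, t') ≥ 0`, i.e.
`ρ_r(s dμ, t') − (1/2)∫ t' dμ ≥ ρ_r(s dμ, t) − (1/2)∫ t dμ` with `r = (t+t')/2`
(stated additively in `ℝ≥0∞`), then `H²(s,t') ≤ ((√2+1)/(√2−1)) H²(s,t)`. -/
theorem stmt_5 {𝒳 : Type*} [MeasurableSpace 𝒳] (μ : Measure 𝒳) (s t t' : 𝒳 → ℝ)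
    (hs : ∀ x, 0 ≤ s x) (ht : ∀ x, 0 ≤ t x) (ht' : ∀ x, 0 ≤ t' x)
    (hsi : Integrable s μ) (hti : Integrable t μ) (ht'i : Integrable t' μ)
    (r : 𝒳 → ℝ) (hrdef : r = fun x => (t x + t' x) / 2)
    (hT : (1/2) * ((∫⁻ x, ENNReal.ofReal (Real.sqrt (t x * r x)) ∂μ)
        + ∫⁻ x, (ENNReal.ofReal (Real.sqrt (t x)) / ENNReal.ofReal (Real.sqrt (r x)))
            * ENNReal.ofReal (s x) ∂μ)
      + ENNReal.ofReal ((1/2) * ∫ x, t' x ∂μ)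
      ≤ (1/2) * ((∫⁻ x, ENNReal.ofReal (Real.sqrt (t' x * r x)) ∂μ)
        + ∫⁻ x, (ENNReal.ofReal (Real.sqrt (t' x)) / ENNReal.ofReal (Real.sqrt (r x)))
            * ENNReal.ofReal (s x) ∂μ)
      + ENNReal.ofReal ((1/2) * ∫ x, t x ∂μ)) :
    (1/2) * (∫ x, (Real.sqrt (s x) - Real.sqrt (t' x))^2 ∂μ) ≤
      ((Real.sqrt 2 + 1) / (Real.sqrt 2 - 1)) *
        ((1/2) * ∫ x, (Real.sqrt (s x) - Real.sqrt (t x))^2 ∂μ) := by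
  have hr x : r x = (t x + t' x) / 2 := by rw [hrdef]
  have hr0 x : 0 ≤ r x := by linarith [hr x, ht x, ht' x]
  have htr x : t x ≤ 2 * r x := by linarith [hr x, ht' x]
  have ht'r x : t' x ≤ 2 * r x := by linarith [hr x, ht x]
  have hri : Integrable r μ := hrdef ▸ (hti.add ht'i).div_const 2
  have hIt : 0 ≤ (1 / 2) * ∫ x, t x ∂μ := mul_nonneg one_half_pos.le (integral_nonneg ht)
  have hIt' : 0 ≤ (1 / 2) * ∫ x, t' x ∂μ := mul_nonneg one_half_pos.le (integral_nonneg ht')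
  rw [← ofReal_variationalAffinity hs ht hr0 htr hsi hti hri,
    ← ofReal_variationalAffinity hs ht' hr0 ht'r hsi ht'i hri,
    ← ofReal_add (variationalAffinity_nonneg hs) hIt',
    ← ofReal_add (variationalAffinity_nonneg hs) hIt,
    ofReal_le_ofReal_iff (add_nonneg (variationalAffinity_nonneg hs) hIt)] at hT
  have hmid : hellingerSq μ s r ≤ (hellingerSq μ s t + hellingerSq μ s t') / 2 :=
    hrdef ▸ hellingerSq_midpoint_le hs ht ht' hsi hti ht'i
  have hdiff : hellingerSq μ s t' - hellingerSq μ s t ≤ √2 * hellingerSq μ s r := by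
    rw [hellingerSq_eq hs ht hsi hti, hellingerSq_eq hs ht' hsi ht'i]
    linarith [hellingerAffinity_le_variationalAffinity hs ht hr0 htr hsi hti hri,
      variationalAffinity_le hs ht' hr0 ht'r hsi ht'i hri]
  refine le_div_sub_one_mul_of_sub_le (X := hellingerSq μ s t) one_lt_sqrt_two ?_
  calc hellingerSq μ s t' - hellingerSq μ s t
      ≤ √2 * ((hellingerSq μ s t + hellingerSq μ s t') / 2) := hdiff.trans (by gcongr)
    _ = (hellingerSq μ s t + hellingerSq μ s t') / √2 := by
      rw [eq_div_iff (sqrt_pos.mpr two_pos).ne']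
      linear_combination (hellingerSq μ s t + hellingerSq μ s t') / 2 * mul_self_sqrt zero_le_two
end

section
/- For the density q(x) = (θ/2)e^{−θ|x|} on ℝ (Laplace density with parameter θ > 0) and its translates q_r(x) = q(x − r), the squared Hellinger distance satisfies h²(q_r, q_{r'}) = 1 − e^{−θ|r−r'|/2}(1 + θ|r−r'|/2) for all real r, r'. -/
/-!
Since `√(q_r q_{r'}) = (θ/2) e^{-θ(|x-r|+|x-r'|)/2}`, the affinity `∫ √(q_r q_{r'})` is the integral
of an exponential whose exponent is affine on each of `(-∞, r']`, `(r', r]` and `(r, ∞)` (for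
`r' ≤ r`). With `d = r - r'`, each tail contributes `e^{-θd/2}/2` and the middle piece
`(θd/2) e^{-θd/2}`, so the affinity is `e^{-θd/2}(1 + θd/2)`.
-/

open MeasureTheory Real Set

theorem integral_eq_Iic_add_Ioc_add_Ioi {E : Type*} [NormedAddCommGroup E] [NormedSpace ℝ E]
    {μ : Measure ℝ} {f : ℝ → E} {a b : ℝ} (hab : a ≤ b) (h₁ : IntegrableOn f (Iic a) μ)
    (h₂ : IntegrableOn f (Ioc a b) μ) (h₃ : IntegrableOn f (Ioi b) μ) :
    ∫ x, f x ∂μ = (∫ x in Iic a, f x ∂μ) + (∫ x in Ioc a b, f x ∂μ) + ∫ x in Ioi b, f x ∂μ := by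
  rw [add_assoc, ← setIntegral_union (Ioc_disjoint_Ioi le_rfl) measurableSet_Ioi h₂ h₃,
    Ioc_union_Ioi_eq_Ioi hab,
    intervalIntegral.integral_Iic_add_Ioi h₁ (Ioc_union_Ioi_eq_Ioi hab ▸ h₂.union h₃)]

theorem sqrt_mul_exp_neg_mul_mul_exp_neg {c : ℝ} (hc : 0 ≤ c) (s t : ℝ) :
    √((c * exp (-s)) * (c * exp (-t))) = c * exp (-((s + t) / 2)) := by
  have hsq : (c * exp (-s)) * (c * exp (-t)) = (c * exp (-((s + t) / 2))) ^ 2 := by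
    rw [mul_mul_mul_comm, ← exp_add, mul_pow, sq (exp _), ← exp_add]
    ring_nf
  rw [hsq, sqrt_sq (by positivity)]

section TwoCentres

variable {a r r' : ℝ}

theorem eqOn_exp_neg_mul_abs_sub_add_abs_sub_Iic (h : r' ≤ r) :
    EqOn (fun x => exp (-(a * (|x - r| + |x - r'|))))
      (fun x => exp (-(a * (r + r'))) * exp (2 * a * x)) (Iic r') := by
  intro x (hx : x ≤ r')
  simp only
  rw [abs_of_nonpos (by linarith), abs_of_nonpos (by linarith), ← exp_add]
  ring_nf

theorem eqOn_exp_neg_mul_abs_sub_add_abs_sub_Ioc :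
    EqOn (fun x => exp (-(a * (|x - r| + |x - r'|)))) (fun _ => exp (-(a * (r - r'))))
      (Ioc r' r) := by
  intro x ⟨hx₁, hx₂⟩
  simp only
  rw [abs_of_nonpos (by linarith), abs_of_pos (by linarith)]
  ring_nf

theorem eqOn_exp_neg_mul_abs_sub_add_abs_sub_Ioi (h : r' ≤ r) :
    EqOn (fun x => exp (-(a * (|x - r| + |x - r'|))))
      (fun x => exp (a * (r + r')) * exp (-(2 * a) * x)) (Ioi r) := by
  intro x (hx : r < x)
  simp only
  rw [abs_of_pos (by linarith), abs_of_pos (by linarith), ← exp_add]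
  ring_nf

theorem integral_exp_neg_mul_abs_sub_add_abs_sub_of_le (ha : 0 < a) (h : r' ≤ r) :
    ∫ x, exp (-(a * (|x - r| + |x - r'|))) = exp (-(a * (r - r'))) * (r - r' + 1 / a) := by
  have h₁ := eqOn_exp_neg_mul_abs_sub_add_abs_sub_Iic (a := a) h
  have h₂ := eqOn_exp_neg_mul_abs_sub_add_abs_sub_Ioc (a := a) (r := r) (r' := r')
  have h₃ := eqOn_exp_neg_mul_abs_sub_add_abs_sub_Ioi (a := a) h
  have h2a : 0 < 2 * a := by positivity
  have hn2a : -(2 * a) < 0 := neg_lt_zero.2 h2a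
  rw [integral_eq_Iic_add_Ioc_add_Ioi h
      (IntegrableOn.congr_fun ((integrableOn_exp_mul_Iic h2a r').const_mul _) h₁.symm
        measurableSet_Iic)
      ((integrableOn_const measure_Ioc_lt_top.ne).congr_fun h₂.symm measurableSet_Ioc)
      (IntegrableOn.congr_fun ((integrableOn_exp_mul_Ioi hn2a r).const_mul _) h₃.symm
        measurableSet_Ioi),
    setIntegral_congr_fun measurableSet_Iic h₁, setIntegral_congr_fun measurableSet_Ioc h₂,
    setIntegral_congr_fun measurableSet_Ioi h₃, integral_const_mul, integral_const_mul,
    integral_exp_mul_Iic h2a, integral_exp_mul_Ioi hn2a, setIntegral_const,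
    Real.volume_real_Ioc_of_le h, smul_eq_mul]
  have hl : exp (-(a * (r + r'))) * exp (2 * a * r') = exp (-(a * (r - r'))) := by
    rw [← exp_add]; ring_nf
  have hr : exp (a * (r + r')) * exp (-(2 * a) * r) = exp (-(a * (r - r'))) := by
    rw [← exp_add]; ring_nf
  rw [← mul_div_assoc, hl, neg_div_neg_eq, ← mul_div_assoc, hr]
  field_simp
  ring

theorem integral_exp_neg_mul_abs_sub_add_abs_sub (ha : 0 < a) (r r' : ℝ) :
    ∫ x, exp (-(a * (|x - r| + |x - r'|))) = exp (-(a * |r - r'|)) * (|r - r'| + 1 / a) := by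
  rcases le_total r' r with h | h
  · rw [abs_of_nonneg (sub_nonneg.2 h)]
    exact integral_exp_neg_mul_abs_sub_add_abs_sub_of_le ha h
  · simp_rw [add_comm |_ - r|, abs_sub_comm r r', abs_of_nonneg (sub_nonneg.2 h)]
    exact integral_exp_neg_mul_abs_sub_add_abs_sub_of_le ha h

end TwoCentres

/-- For the Laplace density `q(x) = (θ/2)e^{−θ|x|}` and its translates `q_r(x) = q(x−r)`,
the squared Hellinger distance `h²(q_r, q_{r'}) = 1 − ∫ √(q_r q_{r'}) dx` satisfies
`h²(q_r, q_{r'}) = 1 − e^{−θ|r−r'|/2}(1 + θ|r−r'|/2)`. -/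
theorem stmt_8 (θ : ℝ) (hθ : 0 < θ) (r r' : ℝ) :
    1 - (∫ x : ℝ, Real.sqrt ((θ / 2 * Real.exp (-(θ * |x - r|)))
            * (θ / 2 * Real.exp (-(θ * |x - r'|)))))
      = 1 - Real.exp (-(θ * |r - r'|) / 2) * (1 + θ * |r - r'| / 2) := by
  have hθ₂ : 0 < θ / 2 := half_pos hθ
  have hsqrt : ∀ x : ℝ, √((θ / 2 * exp (-(θ * |x - r|))) * (θ / 2 * exp (-(θ * |x - r'|))))
      = θ / 2 * exp (-(θ / 2 * (|x - r| + |x - r'|))) := fun x => by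
    rw [sqrt_mul_exp_neg_mul_mul_exp_neg hθ₂.le]
    ring_nf
  simp_rw [hsqrt, integral_const_mul, integral_exp_neg_mul_abs_sub_add_abs_sub hθ₂]
  field_simp
  ring_nf
end

section
/- For the density q(x) = 1/(2(1+|x|)²) on ℝ and its translates q_r(x) = q(x−r), the squared Hellinger distance satisfies h²(q_r, q_{r'}) = ψ(|r − r'|) where ψ(x) = 1 − 2(1+x)log(1+x)/(x(2+x)) for x > 0 and ψ(0) = 0. -/
/-!
The Bhattacharyya integral `∫ √(q_r q_{r'}) = ∫ 1 / (2 (1 + |x - r|) (1 + |x - r'|))` is invariant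
under translating and reflecting `x`, so it depends only on `s = |r - r'|`. Splitting `ℝ` at `0`
and `s` makes the integrand rational, and partial fractions integrate it to logarithms: the two
tails together contribute `log (1 + s) / s` and `[0, s]` contributes `log (1 + s) / (2 + s)`,
which add up to `1 - ψ(s)`.
-/

open MeasureTheory Real Set Filter Topology

noncomputable section

def heavyTailDensity (x : ℝ) : ℝ := 1 / (2 * (1 + |x|) ^ 2)

/-- The Bhattacharyya coefficient `∫ √(q q_s)` of `q = heavyTailDensity` and its translate by `s`,
with the square root already taken. -/
def heavyTailAffinity (s : ℝ) : ℝ := ∫ x, (2 * (1 + |x|) * (1 + |x - s|))⁻¹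

end

lemma integral_comp_add_right_Ioi {E : Type*} [NormedAddCommGroup E] [NormedSpace ℝ E]
    (f : ℝ → E) (c a : ℝ) : ∫ x in Ioi c, f (x + a) = ∫ x in Ioi (c + a), f x := by
  rw [← (measurePreserving_add_right volume a).setIntegral_preimage_emb
    (measurableEmbedding_addRight a) f (Ioi (c + a)), preimage_add_const_Ioi, add_sub_cancel_right]

lemma integral_Ioi_inv_add_mul_add {c d : ℝ} (hc : 0 < c) (hd : 0 < d) (hcd : c ≠ d) :
    ∫ x in Ioi 0, ((x + c) * (x + d))⁻¹ = (log d - log c) / (d - c) := by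
  have hdc : d - c ≠ 0 := sub_ne_zero.mpr hcd.symm
  have hderiv : ∀ x ∈ Ici (0 : ℝ),
      HasDerivAt (fun y ↦ (log (y + c) - log (y + d)) / (d - c)) ((x + c) * (x + d))⁻¹ x := by
    intro x (hx : 0 ≤ x)
    have hxc : x + c ≠ 0 := by positivity
    have hxd : x + d ≠ 0 := by positivity
    refine ((((hasDerivAt_id x).add_const c).log hxc).sub
      (((hasDerivAt_id x).add_const d).log hxd)).div_const (d - c) |>.congr_deriv ?_
    simp only [id]
    field_simp
    ring
  have hlim : Tendsto (fun y ↦ (log (y + c) - log (y + d)) / (d - c)) atTop (𝓝 0) := by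
    simpa using ((tendsto_log_comp_add_sub_log c).sub (tendsto_log_comp_add_sub_log d)).div_const
      (d - c)
  rw [integral_Ioi_of_hasDerivAt_of_nonneg' hderiv (fun x (hx : 0 < x) ↦ by positivity) hlim]
  simp only [zero_add]
  ring

lemma integral_Ioi_inv_add_sq {c : ℝ} (hc : 0 < c) : ∫ x in Ioi 0, ((x + c) ^ 2)⁻¹ = c⁻¹ := by
  have hderiv : ∀ x ∈ Ici (0 : ℝ), HasDerivAt (fun y ↦ -(y + c)⁻¹) ((x + c) ^ 2)⁻¹ x := by
    intro x (hx : 0 ≤ x)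
    refine (((hasDerivAt_id x).add_const c).inv (by positivity)).neg |>.congr_deriv ?_
    simp only [id]
    ring
  have hlim : Tendsto (fun y ↦ -(y + c)⁻¹) atTop (𝓝 0) := by
    simpa using (tendsto_atTop_add_const_right _ c tendsto_id).inv_tendsto_atTop.neg
  rw [integral_Ioi_of_hasDerivAt_of_nonneg' hderiv (fun x (hx : 0 < x) ↦ by positivity) hlim]
  simp

lemma integral_inv_add_mul_sub_add {c s : ℝ} (hc : 0 < c) (hcs : 0 < c + s) :
    ∫ x in (0 : ℝ)..s, ((x + c) * (s - x + c))⁻¹ = 2 * (log (c + s) - log c) / (2 * c + s) := by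
  have hpos : ∀ x ∈ uIcc 0 s, 0 < x + c ∧ 0 < s - x + c := by
    intro x hx
    rcases mem_uIcc.mp hx with ⟨h₀, h₁⟩ | ⟨h₀, h₁⟩ <;> constructor <;> linarith
  have hderiv : ∀ x ∈ uIcc 0 s,
      HasDerivAt (fun y ↦ (log (y + c) - log (s - y + c)) / (2 * c + s))
        ((x + c) * (s - x + c))⁻¹ x := by
    intro x hx
    obtain ⟨h₁, h₂⟩ := hpos x hx
    refine ((((hasDerivAt_id x).add_const c).log h₁.ne').sub
      ((((hasDerivAt_id x).const_sub s).add_const c).log h₂.ne')).div_const (2 * c + s)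
      |>.congr_deriv ?_
    simp only [id]
    field_simp
    rw [div_eq_one_iff_eq (by linarith)]
    ring
  have hint : IntervalIntegrable (fun x ↦ ((x + c) * (s - x + c))⁻¹) volume 0 s :=
    ContinuousOn.intervalIntegrable <| (by fun_prop : Continuous fun x : ℝ ↦ (x + c) * (s - x + c))
      |>.continuousOn.inv₀ fun x hx ↦ (mul_pos (hpos x hx).1 (hpos x hx).2).ne'
  rw [intervalIntegral.integral_eq_sub_of_hasDerivAt hderiv hint]
  simp only [zero_add, sub_self, sub_zero]
  rw [add_comm s c]
  field_simp
  ring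

lemma sqrt_heavyTailDensity_mul (a b : ℝ) :
    √(heavyTailDensity a * heavyTailDensity b) = (2 * (1 + |a|) * (1 + |b|))⁻¹ := by
  rw [heavyTailDensity, heavyTailDensity, div_mul_div_comm, one_mul, one_div,
    show 2 * (1 + |a|) ^ 2 * (2 * (1 + |b|) ^ 2) = (2 * (1 + |a|) * (1 + |b|)) ^ 2 by ring,
    ← inv_pow]
  exact sqrt_sq (by positivity)

lemma integral_sqrt_heavyTailDensity_sub_mul (r r' : ℝ) :
    ∫ x, √(heavyTailDensity (x - r) * heavyTailDensity (x - r')) = heavyTailAffinity (r' - r) := by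
  rw [heavyTailAffinity, ← integral_sub_right_eq_self
    (fun x ↦ (2 * (1 + |x|) * (1 + |x - (r' - r)|))⁻¹) r]
  simp only [sub_sub_sub_cancel_right, sqrt_heavyTailDensity_mul]

lemma heavyTailAffinity_neg (s : ℝ) : heavyTailAffinity (-s) = heavyTailAffinity s := by
  rw [heavyTailAffinity, heavyTailAffinity, ← integral_neg_eq_self]
  simp_rw [abs_neg, neg_sub_neg, abs_sub_comm s]

lemma heavyTailAffinity_abs (s : ℝ) : heavyTailAffinity |s| = heavyTailAffinity s := by
  rcases abs_choice s with h | h <;> rw [h]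
  exact heavyTailAffinity_neg s

/-- Since `1 + |x| ≤ (1 + |s|) (1 + |x - s|)`, the integrand is dominated by a multiple of
`(1 + x ^ 2)⁻¹`. -/
lemma integrable_inv_two_mul_one_add_abs_mul_one_add_abs_sub (s : ℝ) :
    Integrable fun x : ℝ ↦ (2 * (1 + |x|) * (1 + |x - s|))⁻¹ := by
  refine (integrable_inv_one_add_sq.const_mul ((1 + |s|) / 2)).mono' (by fun_prop) ?_
  refine Eventually.of_forall fun x ↦ ?_
  have h₁ : 1 + |x| ≤ (1 + |s|) * (1 + |x - s|) := by
    have := abs_sub_abs_le_abs_sub x s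
    nlinarith [abs_nonneg s, abs_nonneg (x - s)]
  have h₂ : 1 + x ^ 2 ≤ (1 + |x|) ^ 2 := by nlinarith [abs_nonneg x, sq_abs x]
  rw [norm_inv, Real.norm_of_nonneg (by positivity), ← div_eq_mul_inv, div_div, ← one_div,
    div_le_div_iff₀ (by positivity) (by positivity)]
  nlinarith [abs_nonneg x, abs_nonneg s]

/-- Each of the tails `(-∞, 0]` and `(s, ∞)` contributes half of the first integral. -/
lemma heavyTailAffinity_eq_integral_Ioi_add_intervalIntegral {s : ℝ} (hs : 0 ≤ s) :
    heavyTailAffinity s = (∫ x in Ioi 0, ((x + 1) * (x + (1 + s)))⁻¹)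
      + 2⁻¹ * ∫ x in (0 : ℝ)..s, ((x + 1) * (s - x + 1))⁻¹ := by
  rw [heavyTailAffinity]
  set f := fun x : ℝ ↦ (2 * (1 + |x|) * (1 + |x - s|))⁻¹
  have hf (t : Set ℝ) : IntegrableOn f t :=
    (integrable_inv_two_mul_one_add_abs_mul_one_add_abs_sub s).integrableOn
  have left : ∫ x in Iic 0, f x = 2⁻¹ * ∫ x in Ioi 0, ((x + 1) * (x + (1 + s)))⁻¹ := by
    have h := integral_comp_neg_Ioi 0 f
    rw [neg_zero] at h
    rw [← h, ← integral_const_mul]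
    refine setIntegral_congr_fun measurableSet_Ioi fun x (hx : 0 < x) ↦ ?_
    simp only [f]
    rw [abs_neg, abs_of_pos hx, ← neg_add', abs_neg, abs_of_pos (by positivity), ← mul_inv]
    ring
  have middle : ∫ x in Ioc 0 s, f x = 2⁻¹ * ∫ x in (0 : ℝ)..s, ((x + 1) * (s - x + 1))⁻¹ := by
    rw [intervalIntegral.integral_of_le hs, ← integral_const_mul]
    refine setIntegral_congr_fun measurableSet_Ioc fun x ⟨hx₀, hxs⟩ ↦ ?_
    simp only [f]
    rw [abs_of_pos hx₀, abs_of_nonpos (by linarith), ← mul_inv]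
    ring
  have right : ∫ x in Ioi s, f x = 2⁻¹ * ∫ x in Ioi 0, ((x + 1) * (x + (1 + s)))⁻¹ := by
    rw [← zero_add s, ← integral_comp_add_right_Ioi, zero_add, ← integral_const_mul]
    refine setIntegral_congr_fun measurableSet_Ioi fun x (hx : 0 < x) ↦ ?_
    simp only [f]
    rw [add_sub_cancel_right, abs_of_pos hx, abs_of_pos (by positivity), ← mul_inv]
    ring
  have split : ∫ x in Ioi 0, f x = (∫ x in Ioc 0 s, f x) + ∫ x in Ioi s, f x := by
    rw [← Ioc_union_Ioi_eq_Ioi hs]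
    exact setIntegral_union (Ioc_disjoint_Ioi le_rfl) measurableSet_Ioi (hf _) (hf _)
  rw [← intervalIntegral.integral_Iic_add_Ioi (hf (Iic 0)) (hf (Ioi 0))]
  linarith

lemma heavyTailAffinity_zero : heavyTailAffinity 0 = 1 := by
  rw [heavyTailAffinity_eq_integral_Ioi_add_intervalIntegral le_rfl,
    intervalIntegral.integral_same, mul_zero, add_zero]
  simp_rw [add_zero, ← sq]
  rw [integral_Ioi_inv_add_sq one_pos, inv_one]

lemma heavyTailAffinity_of_pos {s : ℝ} (hs : 0 < s) :
    heavyTailAffinity s = 2 * (1 + s) * log (1 + s) / (s * (2 + s)) := by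
  rw [heavyTailAffinity_eq_integral_Ioi_add_intervalIntegral hs.le,
    integral_Ioi_inv_add_mul_add one_pos (by linarith) (by linarith),
    integral_inv_add_mul_sub_add one_pos (by linarith), log_one]
  rw [add_sub_cancel_left, sub_zero, mul_one]
  field_simp [hs.ne']
  ring

/-- For the heavy-tailed density `q(x) = 1/(2(1+|x|)²)` and its translates `q_r(x)=q(x−r)`,
the squared Hellinger distance `h²(q_r,q_{r'}) = 1 − ∫ √(q_r q_{r'}) dx` equals
`ψ(|r−r'|)` where `ψ(x) = 1 − 2(1+x)log(1+x)/(x(2+x))` for `x > 0` and `ψ(0) = 0`. -/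
theorem stmt_9 (r r' : ℝ) :
    1 - (∫ x : ℝ, Real.sqrt ((1 / (2 * (1 + |x - r|)^2)) * (1 / (2 * (1 + |x - r'|)^2))))
      = if r = r' then 0
        else 1 - 2 * (1 + |r - r'|) * Real.log (1 + |r - r'|) / (|r - r'| * (2 + |r - r'|)) := by
  change 1 - ∫ x, √(heavyTailDensity (x - r) * heavyTailDensity (x - r')) = _
  rw [integral_sqrt_heavyTailDensity_sub_mul, ← heavyTailAffinity_abs, abs_sub_comm r' r]
  split_ifs with h
  · rw [h, sub_self, abs_zero, heavyTailAffinity_zero, sub_self]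
  · rw [heavyTailAffinity_of_pos (abs_sub_pos.mpr h)]
end

section
/- Let A: Θ → ℝ be twice continuously differentiable on an open interval Θ ⊆ ℝ with A' > 0 and A'' > 0 on Θ, and suppose A'(v) ≤ κ A''(v) for all v ∈ Θ for some κ > 0. Then for all θ' < θ in Θ, with δ = (θ − θ')/2: (A(θ) + A(θ'))/2 − A((θ+θ')/2) ≤ 2κ (√(A'(θ)) − √(A'(θ')))². -/
/-!
Write `m` for the midpoint, `δ = (θ - θ')/2`, `a = A'(θ)`, `b = A'(θ')`. By convexity the
left-hand side, `((A θ - A m) - (A m - A θ'))/2`, is at most `δ (a - b)/2`; since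
`κ A' - A` is nondecreasing it is also at most `κ a / 2`. The hypothesis `A' ≤ κ A''` makes
`A'(x) e^{-x/κ}` nondecreasing, so `√a ≥ e^{δ/κ} √b`. If `δ/κ ≤ 1` this gap makes the first
bound at most `2κ (√a - √b)²`; otherwise `√a ≥ 2 √b` and the second bound suffices.
-/

open Real Set

theorem Set.OrdConnected.monotoneOn_of_hasDerivAt_nonneg {s : Set ℝ} (hs : s.OrdConnected)
    {f f' : ℝ → ℝ} (hf : ∀ x ∈ s, HasDerivAt f (f' x) x) (hf' : ∀ x ∈ s, 0 ≤ f' x) :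
    MonotoneOn f s :=
  monotoneOn_of_hasDerivWithinAt_nonneg hs.convex
    (fun x hx => (hf x hx).continuousAt.continuousWithinAt)
    (fun x hx => (hf x (interior_subset hx)).hasDerivWithinAt)
    (fun x hx => hf' x (interior_subset hx))

section Derivatives

variable {s : Set ℝ} {f f' f'' : ℝ → ℝ} {p q : ℝ}

theorem sub_le_mul_of_monotoneOn_deriv (hs : s.OrdConnected)
    (hf : ∀ x ∈ s, HasDerivAt f (f' x) x) (hmono : MonotoneOn f' s)
    (hp : p ∈ s) (hq : q ∈ s) (hpq : p ≤ q) : f q - f p ≤ (q - p) * f' q := by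
  have hsub : Icc p q ⊆ s := hs.out hp hq
  have := (ordConnected_Icc (a := p) (b := q)).monotoneOn_of_hasDerivAt_nonneg
    (f := fun x => f' q * x - f x) (f' := fun x => f' q * 1 - f' x)
    (fun x hx => ((hasDerivAt_id' x).const_mul (f' q)).sub (hf x (hsub hx)))
    (fun x hx => by rw [mul_one]; exact sub_nonneg.2 (hmono (hsub hx) hq hx.2))
    (left_mem_Icc.2 hpq) (right_mem_Icc.2 hpq) hpq
  simp only at this
  linarith

theorem mul_le_sub_of_monotoneOn_deriv (hs : s.OrdConnected)
    (hf : ∀ x ∈ s, HasDerivAt f (f' x) x) (hmono : MonotoneOn f' s)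
    (hp : p ∈ s) (hq : q ∈ s) (hpq : p ≤ q) : (q - p) * f' p ≤ f q - f p := by
  have hsub : Icc p q ⊆ s := hs.out hp hq
  have := (ordConnected_Icc (a := p) (b := q)).monotoneOn_of_hasDerivAt_nonneg
    (f := fun x => f x - f' p * x) (f' := fun x => f' x - f' p * 1)
    (fun x hx => (hf x (hsub hx)).sub ((hasDerivAt_id' x).const_mul (f' p)))
    (fun x hx => by rw [mul_one]; exact sub_nonneg.2 (hmono hp (hsub hx) hx.1))
    (left_mem_Icc.2 hpq) (right_mem_Icc.2 hpq) hpq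
  simp only at this
  linarith

variable {κ : ℝ}

theorem sub_le_mul_sub_of_deriv_le_mul (hs : s.OrdConnected)
    (hf : ∀ x ∈ s, HasDerivAt f (f' x) x) (hf' : ∀ x ∈ s, HasDerivAt f' (f'' x) x)
    (hdom : ∀ x ∈ s, f' x ≤ κ * f'' x)
    (hp : p ∈ s) (hq : q ∈ s) (hpq : p ≤ q) : f q - f p ≤ κ * (f' q - f' p) := by
  have := hs.monotoneOn_of_hasDerivAt_nonneg (f := fun x => κ * f' x - f x)
    (fun x hx => ((hf' x hx).const_mul κ).sub (hf x hx))
    (fun x hx => sub_nonneg.2 (hdom x hx)) hp hq hpq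
  simp only at this
  linarith

theorem mul_exp_le_of_deriv_le_mul (hs : s.OrdConnected) (hκ : 0 < κ)
    (hf' : ∀ x ∈ s, HasDerivAt f' (f'' x) x) (hdom : ∀ x ∈ s, f' x ≤ κ * f'' x)
    (hp : p ∈ s) (hq : q ∈ s) (hpq : p ≤ q) : f' p * exp ((q - p) / κ) ≤ f' q := by
  have hexp : ∀ x, HasDerivAt (fun x => exp ((q - x) / κ)) (exp ((q - x) / κ) * (-1 / κ)) x :=
    fun x => by simpa using (((hasDerivAt_id x).const_sub q).div_const κ).exp
  have := hs.monotoneOn_of_hasDerivAt_nonneg (f := fun x => f' x * exp ((q - x) / κ))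
    (f' := fun x => exp ((q - x) / κ) * (f'' x - f' x / κ))
    (fun x hx => ((hf' x hx).mul (hexp x)).congr_deriv (by ring))
    (fun x hx => mul_nonneg (exp_pos _).le <| sub_nonneg.2 <| by
      rw [div_le_iff₀ hκ]; linarith [hdom x hx]) hp hq hpq
  simpa using this

end Derivatives

theorem le_two_mul_sq_sub_of_mul_exp_le {κ s x y L : ℝ} (hκ : 0 < κ) (hs : 0 ≤ s) (hy : 0 ≤ y)
    (hxy : y * exp s ≤ x) (hL₁ : L ≤ κ * s * (x ^ 2 - y ^ 2) / 2) (hL₂ : L ≤ κ * x ^ 2 / 2) :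
    L ≤ 2 * κ * (x - y) ^ 2 := by
  rcases le_or_gt s 1 with hs1 | hs1
  · have hx : y * (1 + s + s ^ 2 / 2) ≤ x :=
      (mul_le_mul_of_nonneg_left (quadratic_le_exp_of_nonneg hs) hy).trans hxy
    have hgap : s * (x + y) ≤ 4 * (x - y) := by
      nlinarith [mul_nonneg (mul_nonneg hy hs) (by nlinarith : 0 ≤ 2 + s - s ^ 2 / 2)]
    have hxy' : 0 ≤ x - y := by nlinarith [mul_nonneg hy hs, mul_nonneg hy (sq_nonneg s)]
    nlinarith [mul_le_mul_of_nonneg_left hgap (mul_nonneg hκ.le hxy')]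
  · have hx : x ≤ 2 * (x - y) := by nlinarith [add_one_le_exp s]
    nlinarith [mul_self_le_mul_self (by linarith) hx]

theorem stmt_12_general (Θ : Set ℝ) (hΘconn : Θ.OrdConnected)
    (A A' A'' : ℝ → ℝ)
    (hA' : ∀ x ∈ Θ, HasDerivAt A (A' x) x)
    (hA'' : ∀ x ∈ Θ, HasDerivAt A' (A'' x) x)
    (hA'pos : ∀ x ∈ Θ, 0 < A' x) (hA''pos : ∀ x ∈ Θ, 0 < A'' x)
    (κ : ℝ) (hκ : 0 < κ) (hdom : ∀ x ∈ Θ, A' x ≤ κ * A'' x)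
    (θ θ' : ℝ) (hθ : θ ∈ Θ) (hθ' : θ' ∈ Θ) (hlt : θ' < θ) :
    (A θ + A θ') / 2 - A ((θ + θ') / 2)
      ≤ 2 * κ * (Real.sqrt (A' θ) - Real.sqrt (A' θ'))^2 := by
  set m := (θ + θ') / 2 with hm_def
  set δ := (θ - θ') / 2 with hδ_def
  have hθ'm : θ' ≤ m := by linarith
  have hmθ : m ≤ θ := by linarith
  have hm : m ∈ Θ := hΘconn.out hθ' hθ ⟨hθ'm, hmθ⟩
  have hmono : MonotoneOn A' Θ :=
    hΘconn.monotoneOn_of_hasDerivAt_nonneg hA'' fun x hx => (hA''pos x hx).le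
  have hupper : A θ - A m ≤ δ * A' θ := by
    convert sub_le_mul_of_monotoneOn_deriv hΘconn hA' hmono hm hθ hmθ using 2; ring
  have hlower : δ * A' θ' ≤ A m - A θ' := by
    convert mul_le_sub_of_monotoneOn_deriv hΘconn hA' hmono hθ' hm hθ'm using 2; ring
  have hκbound : A θ - A m ≤ κ * (A' θ - A' m) :=
    sub_le_mul_sub_of_deriv_le_mul hΘconn hA' hA'' hdom hm hθ hmθ
  have hgrowth : A' θ' * exp (δ / κ) ^ 2 ≤ A' θ := by
    rw [← exp_nat_mul]
    convert mul_exp_le_of_deriv_le_mul hΘconn hκ hA'' hdom hθ' hθ hlt.le using 4; ring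
  have hsqrt : √(A' θ') * exp (δ / κ) ≤ √(A' θ) := by
    rw [le_sqrt (by positivity) (hA'pos θ hθ).le, mul_pow, sq_sqrt (hA'pos θ' hθ').le]
    exact hgrowth
  refine le_two_mul_sq_sub_of_mul_exp_le hκ (by positivity) (sqrt_nonneg _) hsqrt ?_ ?_
  · rw [sq_sqrt (hA'pos θ hθ).le, sq_sqrt (hA'pos θ' hθ').le, mul_div_cancel₀ _ hκ.ne']
    linarith
  · rw [sq_sqrt (hA'pos θ hθ).le]
    linarith [mul_pos hκ (hA'pos m hm), mul_pos (by linarith : 0 < δ) (hA'pos θ' hθ')]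

/-- Let `A` be twice continuously differentiable on an open interval `Θ` with `A' > 0`
and `A'' > 0` on `Θ`, and `A'(v) ≤ κ A''(v)` for all `v ∈ Θ` for some `κ > 0`. Then for
all `θ' < θ` in `Θ`:
`(A(θ) + A(θ'))/2 − A((θ+θ')/2) ≤ 2κ (√(A'(θ)) − √(A'(θ')))²`. -/
theorem stmt_12 (Θ : Set ℝ) (hΘopen : IsOpen Θ) (hΘconn : Θ.OrdConnected)
    (A A' A'' : ℝ → ℝ)
    (hA' : ∀ x ∈ Θ, HasDerivAt A (A' x) x)
    (hA'' : ∀ x ∈ Θ, HasDerivAt A' (A'' x) x)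
    (hA''cont : ContinuousOn A'' Θ)
    (hA'pos : ∀ x ∈ Θ, 0 < A' x) (hA''pos : ∀ x ∈ Θ, 0 < A'' x)
    (κ : ℝ) (hκ : 0 < κ) (hdom : ∀ x ∈ Θ, A' x ≤ κ * A'' x)
    (θ θ' : ℝ) (hθ : θ ∈ Θ) (hθ' : θ' ∈ Θ) (hlt : θ' < θ) :
    (A θ + A θ') / 2 - A ((θ + θ') / 2)
      ≤ 2 * κ * (Real.sqrt (A' θ) - Real.sqrt (A' θ'))^2 :=
  stmt_12_general Θ hΘconn A A' A'' hA' hA'' hA'pos hA''pos κ hκ hdom θ θ' hθ hθ' hlt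
end
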